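/- Let S ⊆ R^d have the property that the intersection of any t distinct translates of S contains at most M points. Suppose there is a partition {1,...,n} = I_1 ⊔ I_2 such that X_1 = Σ_{i∈I_1} a_iξ_i has maximum point probability at most λ_1 and X_2 = Σ_{i∈I_2} a_iξ_i has maximum point probability at most λ_2, where ξ_i are i.i.d. Rademacher. Then Pr(X_1 + X_2 ∈ S) ≤ (M·λ_2)^{1/t} + t·λ_1. -/

import Mathlib

/-!
Write `radSum a = X₁ + X₂` with `X₁ = radSumOn a I` and `X₂ = radSumOn a Iᶜ`: they are
independent, with point masses `μ ≤ λ₁` and `ν ≤ λ₂`. So `Pr(X₁ + X₂ ∈ S)` is the `ν`-average of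
`f y = μ {x | x + y ∈ S}`, the weight of the neighbourhood of `y` in the bipartite sum graph.
Count `t`-tuples of distinct common neighbours, weighted by `μ ⊗ ν`, twice: any `t` distinct `x`'s
have at most `M` common neighbours (the intersection of `t` translates of `S`), so the count is at
most `M λ₂`; and a neighbourhood of weight `f` carries tuples of weight at least
`(f - t λ₁)₊ ^ t`, since every point weighs at most `λ₁`. Jensen's inequality then gives
`(Pr(X₁ + X₂ ∈ S) - t λ₁)₊ ^ t ≤ M λ₂`.
-/

open Finset
open scoped Classical

/-- Probability of an event over uniformly random sign vectors in `{-1,1}^n`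
(encoded as `Fin n → Bool`). -/
noncomputable def rprob {n : ℕ} (P : (Fin n → Bool) → Prop) : ℝ :=
  ((Finset.univ : Finset (Fin n → Bool)).filter P).card / 2 ^ n

/-- The Rademacher sum `∑_{i ∈ I} ξ_i a_i` for a sign vector `ε`. -/
noncomputable def radSumOn {n d : ℕ} (a : Fin n → EuclideanSpace ℝ (Fin d))
    (I : Finset (Fin n)) (ε : Fin n → Bool) : EuclideanSpace ℝ (Fin d) :=
  ∑ i ∈ I, (if ε i then (1 : ℝ) else -1) • a i

/-- The full Rademacher sum `a_1 ξ_1 + ⋯ + a_n ξ_n`. -/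
noncomputable def radSum {n d : ℕ} (a : Fin n → EuclideanSpace ℝ (Fin d))
    (ε : Fin n → Bool) : EuclideanSpace ℝ (Fin d) :=
  radSumOn a Finset.univ ε

/-- `ρ((a_i)_{i ∈ I}) = max_{x ∈ ℝ^d} Pr(∑_{i ∈ I} a_i ξ_i = x)`. -/
noncomputable def rhoOn {n d : ℕ} (a : Fin n → EuclideanSpace ℝ (Fin d))
    (I : Finset (Fin n)) : ℝ :=
  sSup {p : ℝ | ∃ x, p = rprob (fun ε => radSumOn a I ε = x)}

section rprob

variable {n : ℕ}

theorem rprob_nonneg (P : (Fin n → Bool) → Prop) : 0 ≤ rprob P := by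
  unfold rprob; positivity

theorem rprob_true : rprob (fun _ : Fin n → Bool => True) = 1 := by
  simp [rprob]

theorem rprob_eq_sum_fiberwise {β : Type*} [DecidableEq β] (g : (Fin n → Bool) → β) {V : Finset β}
    (hg : ∀ ε, g ε ∈ V) (P : (Fin n → Bool) → Prop) :
    rprob P = ∑ z ∈ V, rprob (fun ε => P ε ∧ g ε = z) := by
  simp only [rprob, ← sum_div]
  rw [card_eq_sum_card_fiberwise (fun ε _ => hg ε)]
  push_cast
  simp only [filter_filter]
  congr!

theorem sum_rprob_eq_one {β : Type*} [DecidableEq β] (g : (Fin n → Bool) → β) :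
    ∑ z ∈ univ.image g, rprob (fun ε => g ε = z) = 1 := by
  simpa using (rprob_eq_sum_fiberwise g (fun ε => mem_image_of_mem g (mem_univ ε)) _).symm.trans
    rprob_true

theorem card_filter_and_mul_pow (I : Finset (Fin n)) {P Q : (Fin n → Bool) → Prop}
    (hP : ∀ ε δ, (∀ i ∈ I, ε i = δ i) → P ε → P δ)
    (hQ : ∀ ε δ, (∀ i ∉ I, ε i = δ i) → Q ε → Q δ) :
    #(univ.filter P) * #(univ.filter Q) = #(univ.filter fun ε => P ε ∧ Q ε) * 2 ^ n := by
  have hcard : 2 ^ n = #(univ : Finset (Fin n → Bool)) := by simp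
  rw [hcard, ← card_product, ← card_product]
  -- `(ε, δ) ↦ (I.piecewise ε δ, I.piecewise δ ε)` is an involution swapping the two sides
  refine card_nbij' (fun p => (I.piecewise p.1 p.2, I.piecewise p.2 p.1))
    (fun p => (I.piecewise p.1 p.2, I.piecewise p.2 p.1)) ?_ ?_ ?_ ?_
  · rintro ⟨ε, δ⟩ h
    simp only [coe_product, coe_filter, Set.mem_prod, Set.mem_ofPred_eq, mem_univ, true_and] at h ⊢
    exact ⟨⟨hP ε _ (fun i hi => by simp [hi]) h.1, hQ δ _ (fun i hi => by simp [hi]) h.2⟩,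
      mem_coe.2 (mem_univ _)⟩
  · rintro ⟨ε, δ⟩ h
    simp only [coe_product, coe_filter, Set.mem_prod, Set.mem_ofPred_eq, mem_univ, true_and] at h ⊢
    exact ⟨hP ε _ (fun i hi => by simp [hi]) h.1.1, hQ ε _ (fun i hi => by simp [hi]) h.1.2⟩
  · rintro ⟨ε, δ⟩ -
    ext i <;> by_cases hi : i ∈ I <;> simp [hi]
  · rintro ⟨ε, δ⟩ -
    ext i <;> by_cases hi : i ∈ I <;> simp [hi]

theorem rprob_and_eq_mul (I : Finset (Fin n)) {P Q : (Fin n → Bool) → Prop}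
    (hP : ∀ ε δ, (∀ i ∈ I, ε i = δ i) → P ε → P δ)
    (hQ : ∀ ε δ, (∀ i ∉ I, ε i = δ i) → Q ε → Q δ) :
    rprob (fun ε => P ε ∧ Q ε) = rprob P * rprob Q := by
  have h := card_filter_and_mul_pow I hP hQ
  simp only [rprob]
  field_simp
  norm_cast
  convert h.symm

theorem rprob_rel_eq_sum {α β : Type*} [DecidableEq α] [DecidableEq β]
    (X : (Fin n → Bool) → α) (Y : (Fin n → Bool) → β)
    (hXY : ∀ x y, rprob (fun ε => X ε = x ∧ Y ε = y) =
      rprob (fun ε => X ε = x) * rprob (fun ε => Y ε = y))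
    (R : α → β → Prop) :
    rprob (fun ε => R (X ε) (Y ε)) = ∑ y ∈ univ.image Y,
      rprob (fun ε => Y ε = y) * ∑ x ∈ univ.image X with R x y, rprob (fun ε => X ε = x) := by
  have hterm : ∀ x y, rprob (fun ε => (R (X ε) (Y ε) ∧ Y ε = y) ∧ X ε = x) =
      if R x y then rprob (fun ε => X ε = x) * rprob (fun ε => Y ε = y) else 0 := by
    intro x y
    rw [← hXY]
    split_ifs with h
    · congr 1; ext ε; constructor
      · rintro ⟨⟨-, rfl⟩, rfl⟩; exact ⟨rfl, rfl⟩
      · rintro ⟨rfl, rfl⟩; exact ⟨⟨h, rfl⟩, rfl⟩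
    · simp only [rprob, div_eq_zero_iff, Nat.cast_eq_zero, card_eq_zero, filter_eq_empty_iff]
      left
      rintro ε - ⟨⟨hR, rfl⟩, rfl⟩
      exact h hR
  rw [rprob_eq_sum_fiberwise Y (fun ε => mem_image_of_mem Y (mem_univ ε))]
  refine sum_congr rfl fun y _ => ?_
  rw [rprob_eq_sum_fiberwise X (fun ε => mem_image_of_mem X (mem_univ ε)), mul_sum, sum_filter]
  exact sum_congr rfl fun x _ => by rw [hterm]; split_ifs <;> ring

end rprob

section radSum

variable {n d : ℕ} (a : Fin n → EuclideanSpace ℝ (Fin d)) (I : Finset (Fin n))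

theorem radSumOn_congr {ε δ : Fin n → Bool} (h : ∀ i ∈ I, ε i = δ i) :
    radSumOn a I ε = radSumOn a I δ :=
  sum_congr rfl fun i hi => by rw [h i hi]

theorem radSum_eq_add (ε : Fin n → Bool) : radSum a ε = radSumOn a I ε + radSumOn a Iᶜ ε :=
  (sum_add_sum_compl I _).symm

theorem rprob_radSumOn_and_compl (x y : EuclideanSpace ℝ (Fin d)) :
    rprob (fun ε => radSumOn a I ε = x ∧ radSumOn a Iᶜ ε = y) =
      rprob (fun ε => radSumOn a I ε = x) * rprob (fun ε => radSumOn a Iᶜ ε = y) :=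
  rprob_and_eq_mul I (fun _ _ h hx => (radSumOn_congr a I h).symm.trans hx)
    (fun _ _ h hy => (radSumOn_congr a Iᶜ fun i hi => h i (mem_compl.1 hi)).symm.trans hy)

theorem rprob_radSum_mem (S : Set (EuclideanSpace ℝ (Fin d))) :
    rprob (fun ε => radSum a ε ∈ S) = ∑ y ∈ univ.image (radSumOn a Iᶜ),
      rprob (fun ε => radSumOn a Iᶜ ε = y) *
        ∑ x ∈ univ.image (radSumOn a I) with x + y ∈ S, rprob (fun ε => radSumOn a I ε = x) := by
  simp_rw [radSum_eq_add a I]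
  exact rprob_rel_eq_sum _ _ (rprob_radSumOn_and_compl a I) (fun x y => x + y ∈ S)

end radSum

section tupleWeight

variable {α : Type*} [DecidableEq α]

/-- `tupleWeight w r A = ∑ w x₁ ⋯ w x_r` over ordered `r`-tuples of distinct elements of `A`. -/
noncomputable def tupleWeight (w : α → ℝ) : ℕ → Finset α → ℝ
  | 0, _ => 1
  | r + 1, A => ∑ x ∈ A, w x * tupleWeight w r (A.erase x)

theorem pow_le_tupleWeight {w : α → ℝ} {ρ : ℝ} (hρ : 0 ≤ ρ) :
    ∀ (r : ℕ) {A : Finset α}, (∀ x ∈ A, 0 ≤ w x) → (∀ x ∈ A, w x ≤ ρ) →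
      max (∑ x ∈ A, w x - r * ρ) 0 ^ r ≤ tupleWeight w r A
  | 0, A, _, _ => by simp [tupleWeight]
  | r + 1, A, hw0, hwρ => by
    set c := max (∑ x ∈ A, w x - ↑(r + 1) * ρ) 0
    have hc0 : 0 ≤ c := le_max_right _ _
    have hcA : c ≤ ∑ x ∈ A, w x := max_le (by nlinarith) (sum_nonneg hw0)
    have hc_erase : ∀ x ∈ A, c ≤ max (∑ y ∈ A.erase x, w y - r * ρ) 0 := fun x hx => by
      rw [sum_erase_eq_sub hx]
      exact max_le_max_right 0 (by push_cast; linarith [hwρ x hx])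
    calc c ^ (r + 1) ≤ (∑ x ∈ A, w x) * c ^ r := by
          rw [pow_succ']; exact mul_le_mul_of_nonneg_right hcA (pow_nonneg hc0 r)
      _ = ∑ x ∈ A, w x * c ^ r := sum_mul _ _ _
      _ ≤ ∑ x ∈ A, w x * tupleWeight w r (A.erase x) := by
          refine sum_le_sum fun x hx => mul_le_mul_of_nonneg_left ?_ (hw0 x hx)
          exact (pow_le_pow_left₀ hc0 (hc_erase x hx) r).trans <|
            pow_le_tupleWeight hρ r (fun y hy => hw0 y (mem_of_mem_erase hy))
              (fun y hy => hwρ y (mem_of_mem_erase hy))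

end tupleWeight

section KovariSosTuran

variable {α β : Type*} [DecidableEq α] (R : α → β → Prop) [DecidableRel R]
  {V₁ : Finset α} {V₂ : Finset β} {μ : α → ℝ} {ν : β → ℝ} {t : ℕ} {q : ℝ}

theorem sum_mul_tupleWeight_sdiff_le (hμ0 : ∀ x ∈ V₁, 0 ≤ μ x) (hμ1 : ∑ x ∈ V₁, μ x ≤ 1)
    (hq : 0 ≤ q) (hB : ∀ B ⊆ V₁, #B = t → ∑ y ∈ V₂ with ∀ b ∈ B, R b y, ν y ≤ q) :
    ∀ (r : ℕ) {B : Finset α}, B ⊆ V₁ → #B + r = t →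
      ∑ y ∈ V₂ with ∀ b ∈ B, R b y, ν y * tupleWeight μ r ({x ∈ V₁ | R x y} \ B) ≤ q
  | 0, B, hBV, hBt => by simpa [tupleWeight] using hB B hBV hBt
  | r + 1, B, hBV, hBt => by
    have hμ1' : ∑ x ∈ V₁ \ B, μ x ≤ 1 :=
      (sum_le_sum_of_subset_of_nonneg sdiff_subset fun x hx _ => hμ0 x hx).trans hμ1
    have hstep : ∀ x ∈ V₁ \ B,
        ∑ y ∈ V₂ with ∀ b ∈ insert x B, R b y,
          ν y * tupleWeight μ r ({z ∈ V₁ | R z y} \ insert x B) ≤ q := fun x hx => by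
      rw [mem_sdiff] at hx
      refine sum_mul_tupleWeight_sdiff_le hμ0 hμ1 hq hB r (insert_subset hx.1 hBV) ?_
      rw [card_insert_of_notMem hx.2]; omega
    calc ∑ y ∈ V₂ with ∀ b ∈ B, R b y, ν y * tupleWeight μ (r + 1) ({x ∈ V₁ | R x y} \ B)
        = ∑ y ∈ V₂ with ∀ b ∈ B, R b y, ∑ x ∈ {x ∈ V₁ | R x y} \ B,
            μ x * (ν y * tupleWeight μ r ({z ∈ V₁ | R z y} \ insert x B)) := by
          refine sum_congr rfl fun y _ => ?_
          simp only [tupleWeight, mul_sum, sdiff_insert]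
          exact sum_congr rfl fun x _ => by ring
      _ = ∑ x ∈ V₁ \ B, ∑ y ∈ V₂ with ∀ b ∈ insert x B, R b y,
            μ x * (ν y * tupleWeight μ r ({z ∈ V₁ | R z y} \ insert x B)) := by
          refine sum_comm' fun y x => ?_
          simp only [mem_sdiff, mem_filter, forall_mem_insert]
          tauto
      _ ≤ ∑ x ∈ V₁ \ B, μ x * q := by
          refine sum_le_sum fun x hx => ?_
          rw [← mul_sum]
          exact mul_le_mul_of_nonneg_left (hstep x hx) (hμ0 x (mem_sdiff.1 hx).1)
      _ ≤ q := by
          rw [← sum_mul]; exact mul_le_of_le_one_left hq hμ1'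

theorem sum_mul_tupleWeight_le (hμ0 : ∀ x ∈ V₁, 0 ≤ μ x) (hμ1 : ∑ x ∈ V₁, μ x ≤ 1)
    (hq : 0 ≤ q) (hB : ∀ B ⊆ V₁, #B = t → ∑ y ∈ V₂ with ∀ b ∈ B, R b y, ν y ≤ q) :
    ∑ y ∈ V₂, ν y * tupleWeight μ t {x ∈ V₁ | R x y} ≤ q := by
  simpa using sum_mul_tupleWeight_sdiff_le R hμ0 hμ1 hq hB t (empty_subset V₁) (by simp)

theorem weighted_kovari_sos_turan (hμ0 : ∀ x ∈ V₁, 0 ≤ μ x) (hμ1 : ∑ x ∈ V₁, μ x ≤ 1)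
    {ρ : ℝ} (hρ : 0 ≤ ρ) (hμρ : ∀ x ∈ V₁, μ x ≤ ρ) (hν0 : ∀ y ∈ V₂, 0 ≤ ν y)
    (hν1 : ∑ y ∈ V₂, ν y = 1) (hq : 0 ≤ q) (ht : t ≠ 0)
    (hB : ∀ B ⊆ V₁, #B = t → ∑ y ∈ V₂ with ∀ b ∈ B, R b y, ν y ≤ q) :
    ∑ y ∈ V₂, ν y * ∑ x ∈ V₁ with R x y, μ x ≤ q ^ (1 / t : ℝ) + t * ρ := by
  set excess : β → ℝ := fun y => max (∑ x ∈ V₁ with R x y, μ x - t * ρ) 0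
  set m := max (∑ y ∈ V₂, ν y * ∑ x ∈ V₁ with R x y, μ x - t * ρ) 0
  have hm0 : 0 ≤ m := le_max_right _ _
  have hm : m ≤ ∑ y ∈ V₂, ν y * excess y := by
    refine max_le ?_ (sum_nonneg fun y hy => mul_nonneg (hν0 y hy) (le_max_right _ _))
    calc ∑ y ∈ V₂, ν y * ∑ x ∈ V₁ with R x y, μ x - t * ρ
        = ∑ y ∈ V₂, ν y * (∑ x ∈ V₁ with R x y, μ x - t * ρ) := by
          simp only [mul_sub, sum_sub_distrib, ← sum_mul, hν1, one_mul]
      _ ≤ ∑ y ∈ V₂, ν y * excess y :=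
          sum_le_sum fun y hy => mul_le_mul_of_nonneg_left (le_max_left _ _) (hν0 y hy)
  have hmt : m ^ t ≤ q :=
    calc m ^ t ≤ (∑ y ∈ V₂, ν y * excess y) ^ t := pow_le_pow_left₀ hm0 hm t
      _ ≤ ∑ y ∈ V₂, ν y * excess y ^ t :=
          Real.pow_arith_mean_le_arith_mean_pow V₂ ν excess hν0 hν1
            (fun y _ => le_max_right _ _) t
      _ ≤ ∑ y ∈ V₂, ν y * tupleWeight μ t {x ∈ V₁ | R x y} :=
          sum_le_sum fun y hy => mul_le_mul_of_nonneg_left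
            (pow_le_tupleWeight hρ t (fun x hx => hμ0 x (mem_filter.1 hx).1)
              (fun x hx => hμρ x (mem_filter.1 hx).1)) (hν0 y hy)
      _ ≤ q := sum_mul_tupleWeight_le R hμ0 hμ1 hq hB
  have hmq : m ≤ q ^ (1 / t : ℝ) := by
    rw [← Real.pow_rpow_inv_natCast hm0 ht, one_div]
    exact Real.rpow_le_rpow (pow_nonneg hm0 t) hmt (by positivity)
  linarith [le_max_left (∑ y ∈ V₂, ν y * ∑ x ∈ V₁ with R x y, μ x - t * ρ) 0]

end KovariSosTuran

section Translates

variable {E : Type*} [AddCommMonoid E] {S : Set E} {t M : ℕ}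

theorem card_filter_forall_add_mem_le
    (hS : ∀ x : Fin t → E, Function.Injective x → Set.encard {y | ∀ i, y + x i ∈ S} ≤ M)
    {B : Finset E} (hB : #B = t) (V : Finset E) : #{y ∈ V | ∀ b ∈ B, b + y ∈ S} ≤ M := by
  let e : Fin t ≃ B := (B.equivFin.trans (finCongr hB)).symm
  have hsub : ↑({y ∈ V | ∀ b ∈ B, b + y ∈ S}) ⊆ {y | ∀ i, y + (e i : E) ∈ S} :=
    fun y hy i => add_comm (e i : E) y ▸ (mem_filter.1 hy).2 _ (e i).2
  have h := (Set.encard_le_encard hsub).trans (hS _ (Subtype.val_injective.comp e.injective))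
  rw [Set.encard_coe_eq_coe_finsetCard] at h
  exact_mod_cast h

theorem sum_filter_forall_add_mem_le
    (hS : ∀ x : Fin t → E, Function.Injective x → Set.encard {y | ∀ i, y + x i ∈ S} ≤ M)
    {ν : E → ℝ} {lam : ℝ} (hν : ∀ y, ν y ≤ lam) (hlam : 0 ≤ lam)
    {B : Finset E} (hB : #B = t) (V : Finset E) :
    ∑ y ∈ V with ∀ b ∈ B, b + y ∈ S, ν y ≤ M * lam :=
  calc ∑ y ∈ V with ∀ b ∈ B, b + y ∈ S, ν y ≤ #{y ∈ V | ∀ b ∈ B, b + y ∈ S} * lam := by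
        simpa using sum_le_card_nsmul _ ν lam fun y _ => hν y
    _ ≤ M * lam := by
        gcongr; exact_mod_cast card_filter_forall_add_mem_le hS hB V

end Translates

theorem stmt11 {d n : ℕ} (S : Set (EuclideanSpace ℝ (Fin d))) (t M : ℕ) (ht : 1 ≤ t)
    (hS : ∀ x : Fin t → EuclideanSpace ℝ (Fin d), Function.Injective x →
      Set.encard {y : EuclideanSpace ℝ (Fin d) | ∀ i, y + x i ∈ S} ≤ (M : ℕ∞))
    (a : Fin n → EuclideanSpace ℝ (Fin d)) (I : Finset (Fin n)) (lam₁ lam₂ : ℝ)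
    (h1 : ∀ x, rprob (fun ε => radSumOn a I ε = x) ≤ lam₁)
    (h2 : ∀ x, rprob (fun ε => radSumOn a Iᶜ ε = x) ≤ lam₂) :
    rprob (fun ε => radSum a ε ∈ S) ≤ ((M : ℝ) * lam₂) ^ ((1 : ℝ) / t) + t * lam₁ := by
  have hlam₁ : 0 ≤ lam₁ := (rprob_nonneg _).trans (h1 0)
  have hlam₂ : 0 ≤ lam₂ := (rprob_nonneg _).trans (h2 0)
  rw [rprob_radSum_mem a I S]
  exact weighted_kovari_sos_turan (fun x y => x + y ∈ S) (fun _ _ => rprob_nonneg _)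
    (sum_rprob_eq_one _).le hlam₁ (fun x _ => h1 x) (fun _ _ => rprob_nonneg _)
    (sum_rprob_eq_one _) (by positivity) (by omega)
    (fun B _ hB => sum_filter_forall_add_mem_le hS h2 hlam₂ hB _)
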